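/- arXiv:1810.07360 — 4 statements merged into one kernel-verified Lean document; each statement's English description precedes it below -/
import Mathlib

section
/- For every integer r ≥ 2, every integer s ≥ 1, and all natural numbers m₁, …, m_s, the function f : ℕ → ℂ given by f(n) = ∏_{i=1}^{s} μ_r(n+m_i) is strongly asymptotically periodic. -/
/-!
If `p ^ r ∣ L` for every prime `p ≤ j`, then `μ_r (x + L) = μ_r x` unless one of `x`, `x + L` is
divisible by `p ^ r`, hence by `p ^ 2`, for some prime `p > j`. The integers divisible by `d ^ 2`
for some `d > j` have upper density at most `∑_{d > j} d⁻² ≤ 2 / (j + 1)`, so shifting the product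
of `s` shifted copies of `μ_r` by a multiple of `n_j = (j!) ^ r` changes it only on a set of
density at most `4 s / (j + 1)`.
-/

open Filter Finset
open scoped Classical

/-- The mean `E_ω(g)` of a bounded function `g : ℕ → ℝ` along an ultrafilter `ω` on `ℕ`:
the limit along `ω` of the Cesàro averages `N ↦ (1/N) ∑_{n=0}^{N-1} g n`. -/
noncomputable def meanAlong (ω : Ultrafilter ℕ) (g : ℕ → ℝ) : ℝ :=
  limUnder (ω : Filter ℕ) (fun N : ℕ => (∑ n ∈ Finset.range N, g n) / N)

/-- A bounded function `f : ℕ → ℂ` is strongly asymptotically periodic if for every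
nonprincipal ultrafilter `ω` on `ℕ` there is a sequence `(n_j)` of positive integers
such that `sup_{l ∈ ℕ} E_ω(|f(·+l·n_j) − f|²) → 0` as `j → ∞`. -/
def StronglyAsymptoticallyPeriodic (f : ℕ → ℂ) : Prop :=
  ∀ ω : Ultrafilter ℕ, (ω : Filter ℕ) ≤ Filter.cofinite →
    ∃ nj : ℕ → ℕ, (∀ j, 0 < nj j) ∧
      Filter.Tendsto
        (fun j => ⨆ l : ℕ, meanAlong ω (fun n => ‖f (n + l * nj j) - f n‖ ^ 2))
        Filter.atTop (nhds 0)

/-- `μ_r(n) = 1` if `n` is `r`-th power-free (no prime `p` satisfies `p^r ∣ n`),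
and `μ_r(n) = 0` otherwise. -/
noncomputable def muR (r : ℕ) (n : ℕ) : ℂ :=
  if ∀ p : ℕ, p.Prime → ¬ p ^ r ∣ n then 1 else 0

namespace meanAlong

variable {ω : Ultrafilter ℕ} {g : ℕ → ℝ} {B : ℝ}

theorem tendsto (hg : ∀ n, |g n| ≤ B) :
    Tendsto (fun N : ℕ => (∑ n ∈ range N, g n) / N) (ω : Filter ℕ) (nhds (meanAlong ω g)) := by
  have hB : 0 ≤ B := (abs_nonneg _).trans (hg 0)
  have hbound : ∀ N : ℕ, (∑ n ∈ range N, g n) / N ∈ Set.Icc (-B) B := by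
    intro N
    rw [Set.mem_Icc, ← abs_le, abs_div, Nat.abs_cast]
    rcases N.eq_zero_or_pos with rfl | hN
    · simpa using hB
    · rw [div_le_iff₀ (by exact_mod_cast hN)]
      calc |∑ n ∈ range N, g n| ≤ ∑ n ∈ range N, |g n| := abs_sum_le_sum_abs _ _
        _ ≤ ∑ _n ∈ range N, B := sum_le_sum fun n _ => hg n
        _ = B * N := by rw [sum_const, card_range, nsmul_eq_mul, mul_comm]
  obtain ⟨x, -, hx⟩ := isCompact_Icc.ultrafilter_le_nhds
    (Ultrafilter.map (fun N : ℕ => (∑ n ∈ range N, g n) / N) ω)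
    (le_principal_iff.2 (mem_map.2 (univ_mem' hbound)))
  exact tendsto_nhds_limUnder ⟨x, hx⟩

theorem nonneg (hg : ∀ n, |g n| ≤ B) (hg0 : ∀ n, 0 ≤ g n) : 0 ≤ meanAlong ω g :=
  ge_of_tendsto' (tendsto hg) fun N => div_nonneg (sum_nonneg fun n _ => hg0 n) N.cast_nonneg

theorem le_of_sum_le (hω : (ω : Filter ℕ) ≤ cofinite) (hg : ∀ n, |g n| ≤ B) {C D : ℝ}
    (hsum : ∀ N, ∑ n ∈ range N, g n ≤ C * N + D) : meanAlong ω g ≤ C := by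
  have hω' : (ω : Filter ℕ) ≤ atTop := Nat.cofinite_eq_atTop ▸ hω
  have hlim : Tendsto (fun N : ℕ => C + D / N) (ω : Filter ℕ) (nhds C) := by
    simpa using (tendsto_const_nhds.add (tendsto_const_div_atTop_nhds_zero_nat D)).mono_left hω'
  refine le_of_tendsto_of_tendsto (tendsto hg) hlim ?_
  filter_upwards [hω' (eventually_gt_atTop 0)] with N hN
  have hN' : (0 : ℝ) < N := by exact_mod_cast hN
  rw [div_le_iff₀ hN', add_mul, div_mul_cancel₀ _ hN'.ne']
  linarith [hsum N]

end meanAlong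

theorem card_filter_dvd_add_le (q c N : ℕ) :
    #{n ∈ range N | q ∣ n + c ∧ n + c ≠ 0} ≤ (N + c) / q := by
  rw [← Nat.Ioc_filter_dvd_card_eq_div]
  refine card_le_card_of_injOn (· + c) (fun n hn => ?_) (fun a _ b _ h => by simpa using h)
  simp only [coe_filter, mem_range, Set.mem_ofPred_eq, mem_Ioc] at hn ⊢
  omega

def HasSquareDivisorAbove (j x : ℕ) : Prop := ∃ d, j < d ∧ d ^ 2 ∣ x

theorem card_filter_hasSquareDivisorAbove_le (j c N : ℕ) :
    (#{n ∈ range N | HasSquareDivisorAbove j (n + c)} : ℝ) ≤ (N + c) * (2 / (j + 1)) + 1 := by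
  have hsub : {n ∈ range N | HasSquareDivisorAbove j (n + c)} ⊆
      insert 0 ((Ioo j (N + c)).biUnion fun d => {n ∈ range N | d ^ 2 ∣ n + c ∧ n + c ≠ 0}) := by
    intro n hn
    obtain ⟨hnN, d, hjd, hd⟩ := by simpa only [mem_filter, mem_range] using hn
    -- every `d ^ 2` divides `0`, so `n + c = 0` is counted separately
    rcases Nat.eq_zero_or_pos (n + c) with h0 | hpos
    · exact mem_insert.2 (Or.inl (by omega))
    have hdd : d ≤ d ^ 2 := Nat.le_self_pow two_ne_zero d
    have := Nat.le_of_dvd hpos hd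
    refine mem_insert_of_mem (mem_biUnion.2 ⟨d, mem_Ioo.2 ⟨hjd, by omega⟩, ?_⟩)
    simp only [mem_filter, mem_range]
    exact ⟨hnN, hd, hpos.ne'⟩
  have hcard : #{n ∈ range N | HasSquareDivisorAbove j (n + c)} ≤
      ∑ d ∈ Ioo j (N + c), (N + c) / d ^ 2 + 1 :=
    calc _ ≤ _ := card_le_card hsub
      _ ≤ _ := card_insert_le _ _
      _ ≤ _ := add_le_add_left (card_biUnion_le.trans
          (sum_le_sum fun d _ => card_filter_dvd_add_le _ c N)) 1
  calc (#{n ∈ range N | HasSquareDivisorAbove j (n + c)} : ℝ)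
      ≤ ∑ d ∈ Ioo j (N + c), (((N + c) / d ^ 2 : ℕ) : ℝ) + 1 := by exact_mod_cast hcard
    _ ≤ ∑ d ∈ Ioo j (N + c), ((N : ℝ) + c) * ((d : ℝ) ^ 2)⁻¹ + 1 := by
        gcongr with d
        exact Nat.cast_div_le.trans_eq (by push_cast; ring)
    _ ≤ (N + c) * (2 / (j + 1)) + 1 := by
        rw [← mul_sum]
        gcongr
        exact sum_Ioo_inv_sq_le j (N + c)

section muR

variable {ι : Type*} {r j L : ℕ}

theorem muR_eq_zero_or_one (r x : ℕ) : muR r x = 0 ∨ muR r x = 1 := by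
  unfold muR
  split_ifs <;> simp

theorem prod_muR_eq_zero_or_one (r : ℕ) (t : Finset ι) (x : ι → ℕ) :
    ∏ i ∈ t, muR r (x i) = 0 ∨ ∏ i ∈ t, muR r (x i) = 1 :=
  prod_induction _ (fun z => z = 0 ∨ z = 1)
    (by rintro a b (rfl | rfl) (rfl | rfl) <;> simp) (Or.inr rfl)
    fun i _ => muR_eq_zero_or_one r (x i)

theorem norm_sq_sub_prod_muR_le_one (r : ℕ) (t : Finset ι) (x y : ι → ℕ) :
    ‖∏ i ∈ t, muR r (x i) - ∏ i ∈ t, muR r (y i)‖ ^ 2 ≤ 1 := by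
  rcases prod_muR_eq_zero_or_one r t x with hx | hx <;>
    rcases prod_muR_eq_zero_or_one r t y with hy | hy <;> simp [hx, hy]

theorem muR_add_eq (hr : 2 ≤ r) (hL : ∀ p, p.Prime → p ≤ j → p ^ r ∣ L) {x : ℕ}
    (hx : ¬ HasSquareDivisorAbove j x) (hxL : ¬ HasSquareDivisorAbove j (x + L)) :
    muR r (x + L) = muR r x := by
  have hdvd_iff : ∀ p, p.Prime → (p ^ r ∣ x + L ↔ p ^ r ∣ x) := by
    intro p hp
    rcases le_or_gt p j with hpj | hjp
    · exact Nat.dvd_add_left (hL p hp hpj)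
    · have hfree : ∀ y, ¬ HasSquareDivisorAbove j y → ¬ p ^ r ∣ y :=
        fun y hy hd => hy ⟨p, hjp, (pow_dvd_pow p hr).trans hd⟩
      exact iff_of_false (hfree _ hxL) (hfree _ hx)
  have hfree_iff : (∀ p, p.Prime → ¬ p ^ r ∣ x + L) ↔ ∀ p, p.Prime → ¬ p ^ r ∣ x :=
    forall_congr' fun p => imp_congr_right fun hp => not_congr (hdvd_iff p hp)
  simp only [muR, hfree_iff]

theorem norm_sq_sub_prod_muR_le (hr : 2 ≤ r) (hL : ∀ p, p.Prime → p ≤ j → p ^ r ∣ L)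
    (t : Finset ι) (m : ι → ℕ) (n : ℕ) :
    ‖∏ i ∈ t, muR r (n + L + m i) - ∏ i ∈ t, muR r (n + m i)‖ ^ 2 ≤
      ∑ i ∈ t, ((if HasSquareDivisorAbove j (n + m i) then 1 else 0) +
        (if HasSquareDivisorAbove j (n + (L + m i)) then 1 else 0) : ℝ) := by
  have hterm : ∀ i ∈ t, (0 : ℝ) ≤ (if HasSquareDivisorAbove j (n + m i) then 1 else 0) +
      (if HasSquareDivisorAbove j (n + (L + m i)) then 1 else 0) := by
    intro i _
    split_ifs <;> norm_num
  by_cases hbad : ∃ i ∈ t, HasSquareDivisorAbove j (n + m i) ∨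
      HasSquareDivisorAbove j (n + (L + m i))
  · obtain ⟨i, hi, hbad⟩ := hbad
    refine (norm_sq_sub_prod_muR_le_one r t _ _).trans (le_trans ?_ (single_le_sum hterm hi))
    rcases hbad with h | h <;> simp only [h, if_true] <;> split_ifs <;> norm_num
  · push Not at hbad
    have hprod : ∏ i ∈ t, muR r (n + L + m i) = ∏ i ∈ t, muR r (n + m i) :=
      prod_congr rfl fun i hi => by
        rw [add_right_comm]
        refine muR_add_eq hr hL (hbad i hi).1 ?_
        rw [add_right_comm, add_assoc]
        exact (hbad i hi).2
    rw [hprod, sub_self, norm_zero, zero_pow two_ne_zero]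
    exact sum_nonneg hterm

theorem meanAlong_norm_sq_sub_prod_muR_mem_Icc {ω : Ultrafilter ℕ}
    (hω : (ω : Filter ℕ) ≤ cofinite) (hr : 2 ≤ r) (hL : ∀ p, p.Prime → p ≤ j → p ^ r ∣ L)
    (t : Finset ι) (m : ι → ℕ) :
    meanAlong ω (fun n => ‖∏ i ∈ t, muR r (n + L + m i) - ∏ i ∈ t, muR r (n + m i)‖ ^ 2) ∈
      Set.Icc (0 : ℝ) (4 * #t / (j + 1)) := by
  have hbdd : ∀ n,
      |‖∏ i ∈ t, muR r (n + L + m i) - ∏ i ∈ t, muR r (n + m i)‖ ^ 2| ≤ 1 := fun n => by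
    rw [abs_of_nonneg (by positivity)]
    exact norm_sq_sub_prod_muR_le_one r t _ _
  refine ⟨meanAlong.nonneg hbdd fun n => by positivity, meanAlong.le_of_sum_le hω hbdd
    (D := ∑ i ∈ t, ((2 * m i + L : ℝ) * (2 / (j + 1)) + 2)) fun N => ?_⟩
  calc ∑ n ∈ range N, ‖∏ i ∈ t, muR r (n + L + m i) - ∏ i ∈ t, muR r (n + m i)‖ ^ 2
      ≤ ∑ n ∈ range N, ∑ i ∈ t, ((if HasSquareDivisorAbove j (n + m i) then 1 else 0) +
          (if HasSquareDivisorAbove j (n + (L + m i)) then 1 else 0) : ℝ) :=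
        sum_le_sum fun n _ => norm_sq_sub_prod_muR_le hr hL t m n
    _ = ∑ i ∈ t, ((#{n ∈ range N | HasSquareDivisorAbove j (n + m i)} : ℝ) +
          #{n ∈ range N | HasSquareDivisorAbove j (n + (L + m i))}) := by
        rw [sum_comm]
        simp only [sum_add_distrib, sum_boole]
    _ ≤ ∑ i ∈ t, (((N : ℝ) + m i) * (2 / (j + 1)) + 1 +
          ((N + (L + m i : ℕ)) * (2 / (j + 1)) + 1)) := by
        gcongr with i
        · exact card_filter_hasSquareDivisorAbove_le j (m i) N
        · exact card_filter_hasSquareDivisorAbove_le j (L + m i) N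
    _ = 4 * #t / (j + 1) * N + ∑ i ∈ t, ((2 * m i + L : ℝ) * (2 / (j + 1)) + 2) := by
        rw [show (4 * #t / (j + 1) * N : ℝ) = ∑ _i ∈ t, (4 / (j + 1) * N : ℝ) by
          rw [sum_const, nsmul_eq_mul]; ring, ← sum_add_distrib]
        refine sum_congr rfl fun i _ => ?_
        push_cast
        ring

end muR

theorem powerfree_products_stronglyAsymptoticallyPeriodic_general
    (r : ℕ) (hr : 2 ≤ r) (s : ℕ) (m : ℕ → ℕ) :
    StronglyAsymptoticallyPeriodic
      (fun n => ∏ i ∈ Finset.Icc 1 s, muR r (n + m i)) := by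
  intro ω hω
  refine ⟨fun j => j.factorial ^ r, fun j => by positivity, ?_⟩
  have hdvd : ∀ j l p : ℕ, p.Prime → p ≤ j → p ^ r ∣ l * j.factorial ^ r := fun j l p hp hpj =>
    dvd_mul_of_dvd_right (pow_dvd_pow_of_dvd (Nat.dvd_factorial hp.pos hpj) r) l
  have hmean : ∀ j l : ℕ, meanAlong ω (fun n =>
      ‖∏ i ∈ Icc 1 s, muR r (n + l * j.factorial ^ r + m i) - ∏ i ∈ Icc 1 s, muR r (n + m i)‖ ^ 2)
        ∈ Set.Icc (0 : ℝ) (4 * s / (j + 1)) := fun j l => by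
    simpa using meanAlong_norm_sq_sub_prod_muR_mem_Icc hω hr (hdvd j l) (Icc 1 s) m
  refine squeeze_zero (fun j => Real.iSup_nonneg fun l => (hmean j l).1)
    (fun j => Real.iSup_le (fun l => (hmean j l).2) (by positivity)) ?_
  simpa [div_eq_mul_inv] using tendsto_one_div_add_atTop_nhds_zero_nat.const_mul (4 * s : ℝ)

/-- Products of shifted `r`-th power-free indicator functions are
strongly asymptotically periodic. -/
theorem powerfree_products_stronglyAsymptoticallyPeriodic
    (r : ℕ) (hr : 2 ≤ r) (s : ℕ) (hs : 1 ≤ s) (m : ℕ → ℕ) :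
    StronglyAsymptoticallyPeriodic
      (fun n => ∏ i ∈ Finset.Icc 1 s, muR r (n + m i)) :=
  powerfree_products_stronglyAsymptoticallyPeriodic_general r hr s m
end

section
/- Let θ be an irrational real number and f : ℕ → ℂ the function f(n) = e^{2πi n² θ}. Then: (i) for all natural numbers l ≠ m, lim_{N→∞} (1/N)·∑_{n=1}^{N} f(n+l)·conj(f(n+m)) = 0; and (ii) for every nonprincipal ultrafilter ω on ℕ and every bounded asymptotically periodic function g : ℕ → ℂ, E_ω(n ↦ f(n)·conj(g(n))) = 0. -/
open Filter Finset

/-- A bounded function `f : ℕ → ℂ` is asymptotically periodic if for every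
nonprincipal ultrafilter `ω` on `ℕ` there is a sequence `(n_j)` of positive integers
such that `E_ω(|f(·+n_j) − f|²) → 0` as `j → ∞`. -/
def AsymptoticallyPeriodic (f : ℕ → ℂ) : Prop :=
  ∀ ω : Ultrafilter ℕ, (ω : Filter ℕ) ≤ Filter.cofinite →
    ∃ nj : ℕ → ℕ, (∀ j, 0 < nj j) ∧
      Filter.Tendsto (fun j => meanAlong ω (fun n => ‖f (n + nj j) - f n‖ ^ 2))
        Filter.atTop (nhds 0)

/-- The function `n ↦ e^{2πi n² θ}`. -/
noncomputable def quadExp (θ : ℝ) (n : ℕ) : ℂ :=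
  Complex.exp (2 * Real.pi * Complex.I * (n : ℂ) ^ 2 * (θ : ℂ))

/-!
Along a nonprincipal ultrafilter `ω`, `⟨u, v⟩ := E_ω(u · conj v)` is a translation-invariant
semi-inner product on bounded sequences. For `f(n) = e(n²θ)` one has
`f(n + a) conj f(n + b) = f(a) conj f(b) · e(2(a - b)θ)ⁿ`, a geometric sequence whose Cesàro means
tend to `0` when `θ` is irrational and `a ≠ b`; so the translates of `f` are orthonormal.

If `g` is asymptotically periodic, take `a > 0` with `d := ‖g(· + a) - g‖` small. Then
`‖g(· + ka) - g‖ ≤ k d`, so `⟨f, g⟩ = ⟨f(· + ka), g(· + ka)⟩` is within `k d` of `⟨f(· + ka), g⟩`.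
Summing over `k = 1, …, J` and applying Cauchy–Schwarz to `⟨∑ₖ f(· + ka), g⟩`, where
`‖∑ₖ f(· + ka)‖ = √J` by orthonormality, gives `J ‖⟨f, g⟩‖ ≤ √J C + J² d` when `|g| ≤ C`.
Letting `d → 0` and then `J → ∞` gives `⟨f, g⟩ = 0`.
-/

open Topology ComplexConjugate

section Cesaro

variable {𝕜 : Type*} [RCLike 𝕜]

noncomputable def cesaroAvg (u : ℕ → 𝕜) (N : ℕ) : 𝕜 := (∑ n ∈ range N, u n) / N

noncomputable def cesaroMean (ω : Ultrafilter ℕ) (u : ℕ → 𝕜) : 𝕜 := limUnder ω (cesaroAvg u)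

lemma meanAlong_eq_cesaroMean (ω : Ultrafilter ℕ) (u : ℕ → ℝ) :
    meanAlong ω u = cesaroMean ω u := rfl

lemma cesaroAvg_sub (u v : ℕ → 𝕜) (N : ℕ) :
    cesaroAvg (fun n => u n - v n) N = cesaroAvg u N - cesaroAvg v N := by
  simp only [cesaroAvg, sum_sub_distrib, sub_div]

lemma cesaroAvg_const_mul (c : 𝕜) (u : ℕ → 𝕜) (N : ℕ) :
    cesaroAvg (fun n => c * u n) N = c * cesaroAvg u N := by
  simp only [cesaroAvg, ← mul_sum, mul_div_assoc]

lemma cesaroAvg_sum {ι : Type*} (s : Finset ι) (u : ι → ℕ → 𝕜) (N : ℕ) :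
    cesaroAvg (fun n => ∑ i ∈ s, u i n) N = ∑ i ∈ s, cesaroAvg (u i) N := by
  simp only [cesaroAvg, sum_comm (s := range N), sum_div]

lemma norm_cesaroAvg_le {u : ℕ → 𝕜} {C : ℝ} (hu : ∀ n, ‖u n‖ ≤ C) (N : ℕ) :
    ‖cesaroAvg u N‖ ≤ C := by
  rcases N.eq_zero_or_pos with rfl | hN
  · simpa [cesaroAvg] using (norm_nonneg _).trans (hu 0)
  rw [cesaroAvg, norm_div, RCLike.norm_natCast, div_le_iff₀ (by positivity)]
  simpa [mul_comm] using norm_sum_le_of_le (range N) fun n _ => hu n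

lemma tendsto_cesaroMean (ω : Ultrafilter ℕ) {u : ℕ → 𝕜} {C : ℝ} (hu : ∀ n, ‖u n‖ ≤ C) :
    Tendsto (cesaroAvg u) ω (𝓝 (cesaroMean ω u)) := by
  obtain ⟨c, -, hc⟩ := (ProperSpace.isCompact_closedBall (0 : 𝕜) C).ultrafilter_le_nhds
    (ω.map (cesaroAvg u)) (le_principal_iff.mpr (mem_map.mpr (univ_mem' fun N => by
      simpa using norm_cesaroAvg_le hu N)))
  rwa [cesaroMean, Tendsto.limUnder_eq hc]

lemma tendsto_cesaroAvg_comp_add_sub {u : ℕ → 𝕜} {C : ℝ} (hu : ∀ n, ‖u n‖ ≤ C) (k : ℕ) :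
    Tendsto (fun N => cesaroAvg (fun n => u (n + k)) N - cesaroAvg u N) atTop (𝓝 0) := by
  have hdiff (N : ℕ) : ∑ n ∈ range N, u (n + k) - ∑ n ∈ range N, u n
      = ∑ n ∈ range k, u (N + n) - ∑ n ∈ range k, u n := by
    have h₁ := sum_range_add u N k
    have h₂ := sum_range_add u k N
    rw [add_comm k N] at h₂
    simp only [add_comm _ k]
    linear_combination h₁ - h₂
  refine squeeze_zero_norm (fun N => ?_) (tendsto_const_div_atTop_nhds_zero_nat (2 * k * C))
  rw [← cesaroAvg_sub, cesaroAvg, sum_sub_distrib, hdiff, norm_div, RCLike.norm_natCast]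
  gcongr
  calc ‖∑ n ∈ range k, u (N + n) - ∑ n ∈ range k, u n‖
      ≤ ‖∑ n ∈ range k, u (N + n)‖ + ‖∑ n ∈ range k, u n‖ := norm_sub_le _ _
    _ ≤ k * C + k * C := by
      gcongr <;> simpa using norm_sum_le_of_le (range k) fun n _ => hu _
    _ = 2 * k * C := by ring

lemma Filter.Tendsto.cesaroAvg_comp_add {l : Filter ℕ} (hl : l ≤ atTop) {u : ℕ → 𝕜} {C : ℝ}
    (hu : ∀ n, ‖u n‖ ≤ C) {x : 𝕜} (h : Tendsto (cesaroAvg u) l (𝓝 x)) (k : ℕ) :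
    Tendsto (cesaroAvg fun n => u (n + k)) l (𝓝 x) := by
  simpa using ((tendsto_cesaroAvg_comp_add_sub hu k).mono_left hl).add h

lemma cesaroAvg_le_sqrt_cesaroAvg_sq {u : ℕ → ℝ} (N : ℕ) :
    cesaroAvg u N ≤ √(cesaroAvg (fun n => u n ^ 2) N) := by
  refine Real.le_sqrt_of_sq_le ?_
  simpa [cesaroAvg] using sum_div_card_sq_le_sum_sq_div_card (s := range N) (f := u)

lemma norm_cesaroAvg_mul_le {u v : ℕ → 𝕜} {B : ℝ} (hv : ∀ n, ‖v n‖ ≤ B) (N : ℕ) :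
    ‖cesaroAvg (fun n => u n * v n) N‖ ≤ √(cesaroAvg (fun n => ‖u n‖ ^ 2) N) * B := by
  have hB : 0 ≤ B := (norm_nonneg _).trans (hv 0)
  calc ‖cesaroAvg (fun n => u n * v n) N‖ ≤ cesaroAvg (fun n => ‖u n‖) N * B := by
        rw [cesaroAvg, cesaroAvg, norm_div, RCLike.norm_natCast, div_mul_eq_mul_div, sum_mul]
        gcongr
        refine norm_sum_le_of_le _ fun n _ => ?_
        rw [norm_mul]
        gcongr
        exact hv n
    _ ≤ √(cesaroAvg (fun n => ‖u n‖ ^ 2) N) * B := by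
        gcongr
        exact cesaroAvg_le_sqrt_cesaroAvg_sq N

lemma norm_le_of_tendsto_cesaroAvg_mul {l : Filter ℕ} [l.NeBot] {u v : ℕ → 𝕜} {B : ℝ}
    (hv : ∀ n, ‖v n‖ ≤ B) {x : 𝕜} {y : ℝ} (hx : Tendsto (cesaroAvg fun n => u n * v n) l (𝓝 x))
    (hy : Tendsto (cesaroAvg fun n => ‖u n‖ ^ 2) l (𝓝 y)) : ‖x‖ ≤ √y * B :=
  le_of_tendsto_of_tendsto' hx.norm (hy.sqrt.mul_const B) (norm_cesaroAvg_mul_le hv)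

lemma sqrt_cesaroAvg_norm_add_sq_le (u v : ℕ → 𝕜) (N : ℕ) :
    √(cesaroAvg (fun n => ‖u n + v n‖ ^ 2) N)
      ≤ √(cesaroAvg (fun n => ‖u n‖ ^ 2) N) + √(cesaroAvg (fun n => ‖v n‖ ^ 2) N) := by
  -- Minkowski's inequality is the triangle inequality in `EuclideanSpace 𝕜 (Fin N)`.
  have h := norm_add_le (WithLp.toLp 2 (fun i : Fin N => u i) : EuclideanSpace 𝕜 (Fin N))
    (WithLp.toLp 2 fun i : Fin N => v i)
  simp only [← WithLp.toLp_add, EuclideanSpace.norm_eq, Pi.add_apply] at h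
  simp only [cesaroAvg, Real.sqrt_div' _ (Nat.cast_nonneg N), ← add_div,
    ← Fin.sum_univ_eq_sum_range (fun n => ‖u n + v n‖ ^ 2),
    ← Fin.sum_univ_eq_sum_range (fun n => ‖u n‖ ^ 2),
    ← Fin.sum_univ_eq_sum_range (fun n => ‖v n‖ ^ 2)]
  gcongr

lemma tendsto_cesaroAvg_pow {z : 𝕜} (hz : ‖z‖ = 1) (hz1 : z ≠ 1) :
    Tendsto (cesaroAvg (z ^ ·)) atTop (𝓝 0) := by
  refine squeeze_zero_norm (fun N => ?_) (tendsto_const_div_atTop_nhds_zero_nat (2 / ‖z - 1‖))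
  rw [cesaroAvg, geom_sum_eq hz1, norm_div, norm_div, RCLike.norm_natCast]
  gcongr
  calc ‖z ^ N - 1‖ ≤ ‖z ^ N‖ + ‖(1 : 𝕜)‖ := norm_sub_le _ _
    _ = 2 := by simp [hz]; norm_num

lemma Complex.ofReal_cesaroAvg (u : ℕ → ℝ) (N : ℕ) :
    ((cesaroAvg u N : ℝ) : ℂ) = cesaroAvg (fun n => (u n : ℂ)) N := by
  simp [cesaroAvg]

end Cesaro

section ShiftDist

variable {𝕜 : Type*} [RCLike 𝕜] {ω : Ultrafilter ℕ} {g : ℕ → 𝕜} {C : ℝ}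

noncomputable def shiftDist (ω : Ultrafilter ℕ) (g : ℕ → 𝕜) (a : ℕ) : ℝ :=
  √(meanAlong ω fun n => ‖g (n + a) - g n‖ ^ 2)

lemma norm_sub_comp_add_sq_le (hg : ∀ n, ‖g n‖ ≤ C) (a n : ℕ) :
    ‖‖g (n + a) - g n‖ ^ 2‖ ≤ (2 * C) ^ 2 := by
  rw [norm_pow, norm_norm]
  gcongr
  exact (norm_sub_le _ _).trans (by linarith [hg (n + a), hg n])

lemma tendsto_cesaroAvg_norm_sub_comp_add_sq (hg : ∀ n, ‖g n‖ ≤ C) (a : ℕ) :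
    Tendsto (cesaroAvg fun n => ‖g (n + a) - g n‖ ^ 2) ω
      (𝓝 (meanAlong ω fun n => ‖g (n + a) - g n‖ ^ 2)) := by
  rw [meanAlong_eq_cesaroMean]
  exact tendsto_cesaroMean ω (norm_sub_comp_add_sq_le hg a)

lemma shiftDist_add_le (hω : (ω : Filter ℕ) ≤ atTop) (hg : ∀ n, ‖g n‖ ≤ C) (x y : ℕ) :
    shiftDist ω g (x + y) ≤ shiftDist ω g x + shiftDist ω g y := by
  have hx : Tendsto (cesaroAvg fun n => ‖g (n + y + x) - g (n + y)‖ ^ 2) ω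
      (𝓝 (meanAlong ω fun n => ‖g (n + x) - g n‖ ^ 2)) :=
    (tendsto_cesaroAvg_norm_sub_comp_add_sq hg x).cesaroAvg_comp_add hω
      (norm_sub_comp_add_sq_le hg x) y
  refine le_of_tendsto_of_tendsto' (tendsto_cesaroAvg_norm_sub_comp_add_sq hg (x + y)).sqrt
    (hx.sqrt.add (tendsto_cesaroAvg_norm_sub_comp_add_sq hg y).sqrt) fun N => ?_
  have hsplit (n : ℕ) :
      g (n + (x + y)) - g n = (g (n + y + x) - g (n + y)) + (g (n + y) - g n) := by
    rw [add_comm x y, ← add_assoc]; abel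
  simpa only [hsplit] using sqrt_cesaroAvg_norm_add_sq_le _ _ N

lemma shiftDist_succ_mul_le (hω : (ω : Filter ℕ) ≤ atTop) (hg : ∀ n, ‖g n‖ ≤ C) (a k : ℕ) :
    shiftDist ω g ((k + 1) * a) ≤ (k + 1) * shiftDist ω g a := by
  induction k with
  | zero => simp
  | succ k ih =>
    rw [add_mul _ 1 a, one_mul]
    push_cast
    linarith [shiftDist_add_le hω hg ((k + 1) * a) a]

end ShiftDist

section Orthogonality

variable {ω : Ultrafilter ℕ} {f g : ℕ → ℂ} {C : ℝ}

def HasOrthogonalShifts (l : Filter ℕ) (f : ℕ → ℂ) : Prop :=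
  ∀ a b, a ≠ b → Tendsto (cesaroAvg fun n => f (n + a) * conj (f (n + b))) l (𝓝 0)

lemma HasOrthogonalShifts.mono {l l' : Filter ℕ} (hf : HasOrthogonalShifts l f) (hl : l' ≤ l) :
    HasOrthogonalShifts l' f :=
  fun a b hab => (hf a b hab).mono_left hl

lemma AsymptoticallyPeriodic.exists_tendsto_shiftDist (hg : AsymptoticallyPeriodic g)
    (hω : (ω : Filter ℕ) ≤ cofinite) :
    ∃ a : ℕ → ℕ, (∀ j, 0 < a j) ∧ Tendsto (fun j => shiftDist ω g (a j)) atTop (𝓝 0) := by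
  obtain ⟨a, ha, hlim⟩ := hg ω hω
  exact ⟨a, ha, by simpa [shiftDist] using hlim.sqrt⟩

lemma tendsto_cesaroAvg_norm_sum_shift_sq {l : Filter ℕ} (hl : l ≤ atTop) (hf : ∀ n, ‖f n‖ = 1)
    (horth : HasOrthogonalShifts l f) {s : ℕ → ℕ} (hs : Function.Injective s) (J : ℕ) :
    Tendsto (cesaroAvg fun n => ‖∑ k ∈ range J, f (n + s k)‖ ^ 2) l (𝓝 J) := by
  have hdiag (a : ℕ) : Tendsto (cesaroAvg fun n => f (n + a) * conj (f (n + a))) l (𝓝 1) := by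
    refine tendsto_const_nhds.congr' <| ((eventually_ge_atTop 1).filter_mono hl).mono fun N hN => ?_
    have hN : (N : ℂ) ≠ 0 := by exact_mod_cast (Nat.one_le_iff_ne_zero.mp hN)
    simp [cesaroAvg, Complex.mul_conj', hf, hN]
  have hpair (j k : ℕ) : Tendsto (cesaroAvg fun n => f (n + s j) * conj (f (n + s k))) l
      (𝓝 (if j = k then 1 else 0)) := by
    split_ifs with h
    · exact h ▸ hdiag (s j)
    · exact horth _ _ (hs.ne h)
  have hexpand (N : ℕ) : ((cesaroAvg (fun n => ‖∑ k ∈ range J, f (n + s k)‖ ^ 2) N : ℝ) : ℂ)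
      = ∑ j ∈ range J, ∑ k ∈ range J, cesaroAvg (fun n => f (n + s j) * conj (f (n + s k))) N := by
    simp only [Complex.ofReal_cesaroAvg, Complex.ofReal_pow, ← Complex.mul_conj', map_sum,
      sum_mul_sum, cesaroAvg_sum]
  rw [← tendsto_ofReal_iff]
  convert tendsto_finsetSum (range J) fun j _ => tendsto_finsetSum (range J) fun k _ => hpair j k
    using 1
  · exact funext hexpand
  · simp [sum_ite_eq, filter_true_of_mem fun _ => mem_range.mp]

lemma norm_cesaroMean_sub_shift_le (hω : (ω : Filter ℕ) ≤ atTop) (hf : ∀ n, ‖f n‖ = 1)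
    (hg : ∀ n, ‖g n‖ ≤ C) (a : ℕ) :
    ‖cesaroMean ω (fun n => f n * conj (g n)) - cesaroMean ω (fun n => f (n + a) * conj (g n))‖
      ≤ shiftDist ω g a := by
  have hfg (a b n : ℕ) : ‖f (n + a) * conj (g (n + b))‖ ≤ C := by simp [hf, hg]
  have hshift : Tendsto (cesaroAvg fun n => f (n + a) * conj (g (n + a))) ω
      (𝓝 (cesaroMean ω fun n => f n * conj (g n))) :=
    (tendsto_cesaroMean ω (hfg 0 0)).cesaroAvg_comp_add hω (hfg 0 0) a
  have hdiff := hshift.sub (tendsto_cesaroMean ω (hfg a 0))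
  simp only [← cesaroAvg_sub] at hdiff
  have hbound := norm_le_of_tendsto_cesaroAvg_mul (u := fun n => conj (g (n + a) - g n))
    (B := 1) (fun n => (hf (n + a)).le) (hdiff.congr fun N => by congr 1; ext n; simp; ring)
    ((tendsto_cesaroAvg_norm_sub_comp_add_sq hg a).congr fun N => by simp only [RCLike.norm_conj])
  simpa [shiftDist] using hbound

lemma norm_sum_cesaroMean_shift_le (hω : (ω : Filter ℕ) ≤ atTop) (hf : ∀ n, ‖f n‖ = 1)
    (horth : HasOrthogonalShifts ω f) (hg : ∀ n, ‖g n‖ ≤ C) {s : ℕ → ℕ}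
    (hs : Function.Injective s) (J : ℕ) :
    ‖∑ k ∈ range J, cesaroMean ω (fun n => f (n + s k) * conj (g n))‖ ≤ √J * C := by
  have hfg (a n : ℕ) : ‖f (n + a) * conj (g n)‖ ≤ C := by simp [hf, hg]
  have hsum : Tendsto (cesaroAvg fun n => (∑ k ∈ range J, f (n + s k)) * conj (g n)) ω
      (𝓝 (∑ k ∈ range J, cesaroMean ω (fun n => f (n + s k) * conj (g n)))) :=
    (tendsto_finsetSum (range J) fun k _ => tendsto_cesaroMean ω (hfg (s k))).congr fun N => by
      simp only [sum_mul, cesaroAvg_sum]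
  exact norm_le_of_tendsto_cesaroAvg_mul (fun n => by simpa using hg n) hsum
    (tendsto_cesaroAvg_norm_sum_shift_sq hω hf horth hs J)

lemma norm_cesaroMean_mul_conj_mul_le (hω : (ω : Filter ℕ) ≤ atTop) (hf : ∀ n, ‖f n‖ = 1)
    (horth : HasOrthogonalShifts ω f) (hg : ∀ n, ‖g n‖ ≤ C) {a : ℕ} (ha : 0 < a) (J : ℕ) :
    ‖cesaroMean ω (fun n => f n * conj (g n))‖ * J ≤ √J * C + J ^ 2 * shiftDist ω g a := by
  set c := cesaroMean ω (fun n => f n * conj (g n))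
  set d := fun b => cesaroMean ω (fun n => f (n + b) * conj (g n))
  have hs : Function.Injective fun k => (k + 1) * a := fun i j h => by
    simpa using Nat.eq_of_mul_eq_mul_right ha h
  have hsplit : c * J = ∑ k ∈ range J, d ((k + 1) * a) + ∑ k ∈ range J, (c - d ((k + 1) * a)) := by
    simp [mul_comm]
  have hclose (k : ℕ) (hk : k ∈ range J) : ‖c - d ((k + 1) * a)‖ ≤ J * shiftDist ω g a := by
    refine (norm_cesaroMean_sub_shift_le hω hf hg _).trans
      ((shiftDist_succ_mul_le hω hg a k).trans ?_)
    gcongr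
    · exact Real.sqrt_nonneg _
    · exact_mod_cast mem_range.mp hk
  calc ‖c‖ * J = ‖c * J‖ := by simp
    _ ≤ ‖∑ k ∈ range J, d ((k + 1) * a)‖ + ‖∑ k ∈ range J, (c - d ((k + 1) * a))‖ :=
      hsplit ▸ norm_add_le _ _
    _ ≤ √J * C + J * (J * shiftDist ω g a) :=
      add_le_add (norm_sum_cesaroMean_shift_le hω hf horth hg hs J)
        (by simpa using norm_sum_le_of_le _ hclose)
    _ = √J * C + J ^ 2 * shiftDist ω g a := by ring

theorem cesaroMean_mul_conj_eq_zero (hω : (ω : Filter ℕ) ≤ cofinite) (hf : ∀ n, ‖f n‖ = 1)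
    (horth : HasOrthogonalShifts ω f) (hg : ∀ n, ‖g n‖ ≤ C) (hgap : AsymptoticallyPeriodic g) :
    cesaroMean ω (fun n => f n * conj (g n)) = 0 := by
  set c := cesaroMean ω (fun n => f n * conj (g n))
  have hω' : (ω : Filter ℕ) ≤ atTop := Nat.cofinite_eq_atTop ▸ hω
  obtain ⟨a, ha, hlim⟩ := hgap.exists_tendsto_shiftDist hω
  have hbound (J : ℕ) : ‖c‖ * J ≤ √J * C :=
    ge_of_tendsto' (by simpa using tendsto_const_nhds.add (hlim.const_mul ((J : ℝ) ^ 2)))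
      fun j => norm_cesaroMean_mul_conj_mul_le hω' hf horth hg (ha j) J
  have hdecay : Tendsto (fun J : ℕ => C / √J) atTop (𝓝 0) :=
    tendsto_const_nhds.div_atTop (Real.tendsto_sqrt_atTop.comp tendsto_natCast_atTop_atTop)
  refine norm_le_zero_iff.mp (ge_of_tendsto hdecay ((eventually_gt_atTop 0).mono fun J hJ => ?_))
  have hJ : 0 < √(J : ℝ) := Real.sqrt_pos.mpr (by exact_mod_cast hJ)
  rw [le_div_iff₀ hJ]
  refine le_of_mul_le_mul_right ?_ hJ
  calc ‖c‖ * √J * √J = ‖c‖ * J := by rw [mul_assoc, Real.mul_self_sqrt (Nat.cast_nonneg _)]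
    _ ≤ √J * C := hbound J
    _ = C * √J := mul_comm _ _

end Orthogonality

section QuadExp

open Complex Real

lemma norm_exp_two_pi_I_mul (x : ℝ) : ‖cexp (2 * π * I * x)‖ = 1 := by
  simpa [mul_comm, mul_left_comm] using norm_exp_ofReal_mul_I (2 * π * x)

lemma exp_two_pi_I_mul_ne_one {x : ℝ} (hx : Irrational x) : cexp (2 * π * I * x) ≠ 1 := by
  intro h
  obtain ⟨k, hk⟩ := exp_eq_one_iff.mp h
  have h2πI : 2 * π * I ≠ 0 := by simp [pi_ne_zero, I_ne_zero]
  have hxk : (x : ℂ) = k := mul_left_cancel₀ h2πI (by rw [hk]; ring)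
  exact hx.ne_int k (by exact_mod_cast hxk)

lemma norm_quadExp (θ : ℝ) (n : ℕ) : ‖quadExp θ n‖ = 1 := by
  have h : quadExp θ n = cexp (2 * π * I * ((n ^ 2 * θ : ℝ) : ℂ)) := by
    rw [quadExp]; push_cast; ring_nf
  rw [h, norm_exp_two_pi_I_mul]

lemma quadExp_add_mul_conj (θ : ℝ) (a b n : ℕ) :
    quadExp θ (n + a) * conj (quadExp θ (n + b)) =
      quadExp θ a * conj (quadExp θ b) *
        cexp (2 * π * I * ((2 * ((a : ℤ) - b) : ℤ) * θ : ℝ)) ^ n := by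
  simp only [quadExp, ← Complex.exp_conj, ← Complex.exp_nat_mul, ← Complex.exp_add]
  congr 1
  simp only [map_mul, map_pow, conj_I, conj_ofReal, map_natCast, map_ofNat]
  push_cast
  ring

lemma hasOrthogonalShifts_quadExp {θ : ℝ} (hθ : Irrational θ) :
    HasOrthogonalShifts atTop (quadExp θ) := by
  intro a b hab
  have hz := exp_two_pi_I_mul_ne_one (hθ.intCast_mul (m := 2 * ((a : ℤ) - b)) (by omega))
  have h := (tendsto_cesaroAvg_pow (norm_exp_two_pi_I_mul _) hz).const_mul
    (quadExp θ a * conj (quadExp θ b))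
  rw [mul_zero] at h
  refine h.congr fun N => ?_
  simp only [quadExp_add_mul_conj]
  exact (cesaroAvg_const_mul (𝕜 := ℂ) _ _ N).symm

end QuadExp

/-- For `θ` irrational and `f(n) = e^{2πi n² θ}`:
(i) the shifts of `f` are pairwise orthogonal in mean;
(ii) `f` is orthogonal to every bounded asymptotically periodic function. -/
theorem quadExp_orthogonal_asymptoticallyPeriodic (θ : ℝ) (hθ : Irrational θ) :
    (∀ l m : ℕ, l ≠ m → Filter.Tendsto (fun N : ℕ =>
        (1 / (N : ℂ)) * ∑ n ∈ Finset.Icc 1 N,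
          quadExp θ (n + l) * (starRingEnd ℂ) (quadExp θ (n + m)))
      Filter.atTop (nhds 0))
    ∧ (∀ ω : Ultrafilter ℕ, (ω : Filter ℕ) ≤ Filter.cofinite →
        ∀ g : ℕ → ℂ, (∃ C : ℝ, ∀ n, ‖g n‖ ≤ C) → AsymptoticallyPeriodic g →
          Filter.Tendsto (fun N : ℕ =>
              (1 / (N : ℂ)) * ∑ n ∈ Finset.range N,
                quadExp θ n * (starRingEnd ℂ) (g n))
            (ω : Filter ℕ) (nhds 0)) := by
  refine ⟨fun l m hlm => ?_, fun ω hω g ⟨C, hg⟩ hgap => ?_⟩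
  · refine (hasOrthogonalShifts_quadExp hθ (l + 1) (m + 1) (by omega)).congr fun N => ?_
    rw [cesaroAvg, one_div_mul_eq_div, ← Ico_add_one_right_eq_Icc, sum_Ico_eq_sum_range]
    simp only [add_tsub_cancel_right, add_comm 1, add_assoc]
  · have horth := (hasOrthogonalShifts_quadExp hθ).mono (Nat.cofinite_eq_atTop ▸ hω)
    have hmean := tendsto_cesaroMean ω (u := fun n => quadExp θ n * conj (g n))
      (fun n => by simpa [norm_quadExp] using hg n)
    rw [cesaroMean_mul_conj_eq_zero hω (norm_quadExp θ) horth hg hgap] at hmean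
    exact hmean.congr fun N => by rw [cesaroAvg, one_div_mul_eq_div]
end

section
/- Let X be a compact metrizable space, T : X → X a continuous map, and ν a T-invariant Borel probability measure on X. Suppose (n_j)_{j≥1} is a sequence of positive integers such that for every continuous g : X → ℂ, lim_{j→∞} ∫_X |g(T^{n_j} x) − g(x)|² dν(x) = 0. Then for every Borel set F ⊆ X, lim_{j→∞} ν(T^{−n_j}F △ F) = 0, where △ denotes symmetric difference. -/
/-!
The Koopman operators `f ↦ f ∘ T^n` are isometries of `L²(ν)`, so the set of `f ∈ L²(ν)` with
`f ∘ T^{n_j} → f` is closed. By hypothesis it contains the continuous functions, which are dense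
in `L²(ν)`, hence it contains the indicator `1_F`; and `‖1_F ∘ T^n - 1_F‖₂² = ν(T^{-n}F ∆ F)`.
-/

open Filter MeasureTheory Topology
open scoped symmDiff ENNReal

namespace MeasureTheory.Lp

variable {α E : Type*} [MeasurableSpace α] {μ : Measure α} [NormedAddCommGroup E] {p : ℝ≥0∞}

theorem compMeasurePreserving_indicatorConstLp {β : Type*} [MeasurableSpace β] {μb : Measure β}
    {f : α → β} (hf : MeasurePreserving f μ μb) {s : Set β} (hs : MeasurableSet s)
    (hμs : μb s ≠ ∞) (c : E) :
    compMeasurePreserving f hf (indicatorConstLp p hs hμs c) =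
      indicatorConstLp p (hs.preimage hf.measurable)
        (by rwa [hf.measure_preimage hs.nullMeasurableSet]) c :=
  rfl

theorem norm_compMeasurePreserving_toLp_sub {T : α → α} (hT : MeasurePreserving T μ μ)
    {g : α → E} (hg : MemLp g p μ) (hp₀ : p ≠ 0) (hp : p ≠ ∞) :
    ‖compMeasurePreserving T hT (hg.toLp g) - hg.toLp g‖ =
      (∫ x, ‖g (T x) - g x‖ ^ p.toReal ∂μ) ^ p.toReal⁻¹ := by
  have hdiff := (hg.comp_measurePreserving hT).sub hg
  rw [toLp_compMeasurePreserving, ← MemLp.toLp_sub, norm_toLp _ hdiff,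
    hdiff.eLpNorm_eq_integral_rpow_norm hp₀ hp, ENNReal.toReal_ofReal (by positivity)]
  rfl

theorem tendsto_measure_symmDiff_of_tendsto_indicatorConstLp [Fact (1 ≤ p)] {ι : Type*}
    {l : Filter ι} {s : Set α} {hs : MeasurableSet s} {hμs : μ s ≠ ∞} {t : ι → Set α}
    {ht : ∀ i, MeasurableSet (t i)} {hμt : ∀ i, μ (t i) ≠ ∞} {c : E} (hc : c ≠ 0) (hp : p ≠ ∞)
    (h : Tendsto (fun i ↦ indicatorConstLp p (ht i) (hμt i) c) l
      (𝓝 (indicatorConstLp p hs hμs c))) :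
    Tendsto (fun i ↦ μ (t i ∆ s)) l (𝓝 0) := by
  have hp₀ : p ≠ 0 := (zero_lt_one.trans_le Fact.out).ne'
  rw [tendsto_iff_dist_tendsto_zero] at h
  simp only [dist_indicatorConstLp_eq_norm, norm_indicatorConstLp hp₀ hp] at h
  have hq : p.toReal ≠ 0 := ENNReal.toReal_ne_zero.2 ⟨hp₀, hp⟩
  have hroot : Tendsto (fun i ↦ μ.real (t i ∆ s) ^ (1 / p.toReal)) l (𝓝 0) := by
    simpa [hc] using h.const_mul ‖c‖⁻¹
  have hreal : Tendsto (fun i ↦ μ.real (t i ∆ s)) l (𝓝 0) := by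
    have := hroot.rpow_const (p := p.toReal) (Or.inr ENNReal.toReal_nonneg)
    simpa [Real.zero_rpow hq, ← Real.rpow_mul measureReal_nonneg, hq] using this
  rw [← ENNReal.tendsto_toReal_iff (fun i ↦ measure_symmDiff_ne_top (hμt i) hμs)
    ENNReal.zero_ne_top]
  simpa only [measureReal_def, ENNReal.toReal_zero] using hreal

theorem tendsto_compMeasurePreserving_iterate_of_dense [Fact (1 ≤ p)] {T : α → α}
    (hT : MeasurePreserving T μ μ) {ι : Type*} {l : Filter ι} {n : ι → ℕ}
    {s : Set (Lp E p μ)} (hs : Dense s)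
    (h : ∀ g ∈ s, Tendsto (fun i ↦ compMeasurePreserving T^[n i] (hT.iterate (n i)) g) l (𝓝 g))
    (g : Lp E p μ) :
    Tendsto (fun i ↦ compMeasurePreserving T^[n i] (hT.iterate (n i)) g) l (𝓝 g) := by
  have hclosed : IsClosed {g : Lp E p μ |
      Tendsto (fun i ↦ compMeasurePreserving T^[n i] (hT.iterate (n i)) g) l (𝓝 g)} :=
    Equicontinuous.isClosed_setOfPred_tendsto
      (LipschitzWith.uniformEquicontinuous _ 1 fun i ↦
        (isometry_compMeasurePreserving (hT.iterate (n i))).lipschitz).equicontinuous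
      continuous_id
  exact hclosed.closure_subset_iff.2 h (hs g)

theorem tendsto_compMeasurePreserving_iterate_toLp [Fact (1 ≤ p)] {T : α → α}
    (hT : MeasurePreserving T μ μ) {ι : Type*} {l : Filter ι} {n : ι → ℕ} {g : α → E}
    (hg : MemLp g p μ) (hp : p ≠ ∞)
    (h : Tendsto (fun i ↦ ∫ x, ‖g (T^[n i] x) - g x‖ ^ p.toReal ∂μ) l (𝓝 0)) :
    Tendsto (fun i ↦ compMeasurePreserving T^[n i] (hT.iterate (n i)) (hg.toLp g)) l
      (𝓝 (hg.toLp g)) := by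
  have hp₀ : p ≠ 0 := (zero_lt_one.trans_le Fact.out).ne'
  have hq : p.toReal⁻¹ ≠ 0 := inv_ne_zero (ENNReal.toReal_ne_zero.2 ⟨hp₀, hp⟩)
  rw [tendsto_iff_norm_sub_tendsto_zero]
  simp_rw [norm_compMeasurePreserving_toLp_sub (hT.iterate _) hg hp₀ hp]
  simpa [Real.zero_rpow hq] using h.rpow_const (p := p.toReal⁻¹) (Or.inr (by positivity))

end MeasureTheory.Lp

theorem rigidity_on_borel_sets_general
    {X : Type*} [TopologicalSpace X] [TopologicalSpace.MetrizableSpace X]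
    [MeasurableSpace X] [BorelSpace X]
    (T : X → X) (hT : Continuous T)
    (ν : Measure X) [IsProbabilityMeasure ν]
    (hinv : ∀ B : Set X, MeasurableSet B → ν (T ⁻¹' B) = ν B)
    (nj : ℕ → ℕ)
    (hrig : ∀ g : C(X, ℂ), Filter.Tendsto
      (fun j => ∫ y, ‖g (T^[nj j] y) - g y‖ ^ 2 ∂ν) Filter.atTop (nhds 0)) :
    ∀ F : Set X, MeasurableSet F →
      Filter.Tendsto (fun j => ν ((T^[nj j] ⁻¹' F) ∆ F)) Filter.atTop (nhds 0) := by
  intro F hF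
  have hmp : MeasurePreserving T ν ν :=
    ⟨hT.measurable, Measure.ext fun s hs ↦ by rw [Measure.map_apply hT.measurable hs, hinv s hs]⟩
  have hL2 : ∀ f : Lp ℂ 2 ν,
      Tendsto (fun j ↦ Lp.compMeasurePreserving T^[nj j] (hmp.iterate _) f) atTop (𝓝 f) := by
    refine Lp.tendsto_compMeasurePreserving_iterate_of_dense hmp
      (BoundedContinuousFunction.toLp_denseRange ℂ ν ℂ ENNReal.ofNat_ne_top) ?_
    rintro _ ⟨g, rfl⟩
    exact Lp.tendsto_compMeasurePreserving_iterate_toLp hmp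
      ((g.memLp_top (μ := ν)).mono_exponent le_top) ENNReal.ofNat_ne_top
      (by simpa using hrig g.toContinuousMap)
  have hindicator := hL2 (indicatorConstLp 2 hF (measure_ne_top ν F) (1 : ℂ))
  simp only [Lp.compMeasurePreserving_indicatorConstLp] at hindicator
  exact Lp.tendsto_measure_symmDiff_of_tendsto_indicatorConstLp one_ne_zero ENNReal.ofNat_ne_top
    hindicator

/-- If a `T`-invariant Borel probability measure on a compact
metrizable space is rigid along `(n_j)` for continuous functions, then it is rigid
along `(n_j)` for Borel sets. -/
theorem rigidity_on_borel_sets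
    {X : Type*} [TopologicalSpace X] [CompactSpace X] [TopologicalSpace.MetrizableSpace X]
    [MeasurableSpace X] [BorelSpace X]
    (T : X → X) (hT : Continuous T)
    (ν : Measure X) [IsProbabilityMeasure ν]
    (hinv : ∀ B : Set X, MeasurableSet B → ν (T ⁻¹' B) = ν B)
    (nj : ℕ → ℕ) (hpos : ∀ j, 0 < nj j)
    (hrig : ∀ g : C(X, ℂ), Filter.Tendsto
      (fun j => ∫ y, ‖g (T^[nj j] y) - g y‖ ^ 2 ∂ν) Filter.atTop (nhds 0)) :
    ∀ F : Set X, MeasurableSet F →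
      Filter.Tendsto (fun j => ν ((T^[nj j] ⁻¹' F) ∆ F)) Filter.atTop (nhds 0) :=
  rigidity_on_borel_sets_general T hT ν hinv nj hrig
end

section
/- Let X be a compact metric space, T : X → X a homeomorphism, and ν a T-invariant Borel probability measure on X. Suppose ν has discrete spectrum: there exist an orthonormal (Hilbert) basis (f_l)_{l∈ℕ} of L²(X,ν;ℂ) and real numbers (λ_l)_{l∈ℕ} such that for each l, f_l(Tx) = e^{2πiλ_l}·f_l(x) for ν-almost every x. Then there exists a sequence (n_j)_{j≥1} of positive integers such that for every f ∈ L²(X,ν;ℂ), lim_{j→∞} ‖f ∘ T^{n_j} − f‖_{L²(ν)} = 0. -/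
/-!
On the eigenfunction `b l` the Koopman operator `f ↦ f ∘ Tⁿ` acts as multiplication by `e_lⁿ`,
where `e_l = exp (2πi λ_l)`. The point `(e_l)_l` of the compact metrizable group `ℕ → Circle`
is recurrent: if `(e_l^{m_k})_l` converges along `m_0 < m_1 < ⋯`, then the gaps
`n_j = m_{j+1} - m_j` satisfy `e_l^{n_j} → 1` for every `l` simultaneously. Hence
`b l ∘ T^{n_j} → b l` for every `l`, and since the Koopman operators are isometries,
this convergence passes from the dense span of the basis to all of `L²`.
-/

open Filter Topology MeasureTheory

theorem exists_tendsto_pow_nhds_one {G : Type*} [Group G] [TopologicalSpace G]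
    [IsTopologicalGroup G] [CompactSpace G] [FirstCountableTopology G] (g : G) :
    ∃ n : ℕ → ℕ, (∀ j, 0 < n j) ∧ Tendsto (fun j => g ^ n j) atTop (𝓝 1) := by
  obtain ⟨p, -, m, hm, hmp⟩ := isCompact_univ.tendsto_subseq (x := fun k => g ^ k)
    fun _ => Set.mem_univ _
  refine ⟨fun j => m (j + 1) - m j, fun j => Nat.sub_pos_of_lt (hm (Nat.lt_succ_self j)), ?_⟩
  have hgap : Tendsto (fun j => g ^ m (j + 1) * (g ^ m j)⁻¹) atTop (𝓝 (p * p⁻¹)) :=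
    (hmp.comp (tendsto_add_atTop_nat 1)).mul hmp.inv
  rw [mul_inv_cancel] at hgap
  simpa only [pow_sub g (hm (Nat.lt_succ_self _)).le] using hgap

theorem ae_apply_iterate_eq_pow_smul {α M β : Type*} [MeasurableSpace α] {μ : Measure α}
    [Monoid M] [MulAction M β] {T : α → α} (hT : Measure.QuasiMeasurePreserving T μ μ)
    {f : α → β} {c : M} (hf : ∀ᵐ x ∂μ, f (T x) = c • f x) (n : ℕ) :
    ∀ᵐ x ∂μ, f (T^[n] x) = c ^ n • f x := by
  induction n with
  | zero => simp
  | succ n ih =>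
    filter_upwards [ih, (hT.iterate n).ae hf] with x hn hstep
    rw [Function.iterate_succ_apply', hstep, hn, pow_succ', mul_smul]

theorem Lp.compMeasurePreserving_iterate_of_ae_apply_eq_smul {α E 𝕜 : Type*}
    [MeasurableSpace α] {μ : Measure α} {p : ENNReal} [NormedAddCommGroup E] [NormedRing 𝕜]
    [Module 𝕜 E] [IsBoundedSMul 𝕜 E] {T : α → α} (hT : MeasurePreserving T μ μ)
    {g : Lp E p μ} {c : 𝕜} (hg : ∀ᵐ x ∂μ, g (T x) = c • g x) (n : ℕ) :
    Lp.compMeasurePreserving (T^[n]) (hT.iterate n) g = c ^ n • g := by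
  apply Lp.ext
  filter_upwards [Lp.coeFn_compMeasurePreserving g (hT.iterate n),
    ae_apply_iterate_eq_pow_smul hT.quasiMeasurePreserving hg n, Lp.coeFn_smul (c ^ n) g]
    with x hcomp hpow hsmul
  rw [hcomp, hsmul, Function.comp_apply, hpow, Pi.smul_apply]

theorem LinearIsometry.tendsto_apply_of_dense_span {ι κ 𝕜 E : Type*} [NormedField 𝕜]
    [NormedAddCommGroup E] [NormedSpace 𝕜 E] {U : ι → E →ₗᵢ[𝕜] E} {l : Filter ι} {v : κ → E}
    (hv : (Submodule.span 𝕜 (Set.range v)).topologicalClosure = ⊤)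
    (hUv : ∀ k, Tendsto (fun i => U i (v k)) l (𝓝 (v k))) (x : E) :
    Tendsto (fun i => U i x) l (𝓝 x) := by
  have hclosed : IsClosed {x : E | Tendsto (fun i => U i x) l (𝓝 x)} :=
    (LipschitzWith.uniformEquicontinuous (fun i => ⇑(U i)) 1 fun i => (U i).lipschitz)
      |>.equicontinuous.isClosed_setOfPred_tendsto continuous_id
  have hspan : (Submodule.span 𝕜 (Set.range v) : Set E) ⊆
      {x : E | Tendsto (fun i => U i x) l (𝓝 x)} := by
    intro x hx
    induction hx using Submodule.span_induction with
    | mem x hx => obtain ⟨k, rfl⟩ := hx; exact hUv k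
    | zero => simpa using tendsto_const_nhds
    | add x y _ _ hx hy => simpa only [Set.mem_ofPred_eq, map_add] using hx.add hy
    | smul c x _ hx => simpa only [Set.mem_ofPred_eq, map_smul] using hx.const_smul c
  have hx : x ∈ closure (Submodule.span 𝕜 (Set.range v) : Set E) := by
    rw [← Submodule.topologicalClosure_coe, hv]
    trivial
  exact closure_minimal hspan hclosed hx

theorem Lp.tendsto_eLpNorm_comp_sub_of_tendsto {ι α E : Type*} [MeasurableSpace α]
    {μ : Measure α} {p : ENNReal} [Fact (1 ≤ p)] [NormedAddCommGroup E] {l : Filter ι}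
    {S : ι → α → α} (hS : ∀ i, MeasurePreserving (S i) μ μ) {f : Lp E p μ}
    (hf : Tendsto (fun i => Lp.compMeasurePreserving (S i) (hS i) f) l (𝓝 f)) :
    Tendsto (fun i => eLpNorm (fun x => f (S i x) - f x) p μ) l (𝓝 0) := by
  rw [tendsto_iff_edist_tendsto_0] at hf
  refine hf.congr fun i => ?_
  rw [Lp.edist_def]
  refine eLpNorm_congr_ae ?_
  filter_upwards [Lp.coeFn_compMeasurePreserving f (hS i)] with x hx
  rw [Pi.sub_apply, hx, Function.comp_apply]

theorem Circle.coe_exp_two_pi_mul (t : ℝ) :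
    (Circle.exp (2 * Real.pi * t) : ℂ) = Complex.exp (2 * Real.pi * Complex.I * t) := by
  rw [Circle.coe_exp]
  push_cast
  ring_nf

theorem rigid_of_discrete_spectrum_general
    {X : Type*} [MetricSpace X]
    [MeasurableSpace X] [BorelSpace X]
    (T : X ≃ₜ X)
    (ν : Measure X)
    (hinv : ∀ B : Set X, MeasurableSet B → ν (⇑T ⁻¹' B) = ν B)
    (b : HilbertBasis ℕ ℂ (Lp ℂ 2 ν)) (lam : ℕ → ℝ)
    (hb : ∀ l : ℕ, ∀ᵐ x ∂ν,
      (b l : Lp ℂ 2 ν) (T x) = Complex.exp (2 * Real.pi * Complex.I * lam l) * (b l : Lp ℂ 2 ν) x) :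
    ∃ nj : ℕ → ℕ, (∀ j, 0 < nj j) ∧
      ∀ f : Lp ℂ 2 ν,
        Filter.Tendsto (fun j => eLpNorm (fun x => f ((⇑T)^[nj j] x) - f x) 2 ν)
          Filter.atTop (nhds 0) := by
  have hT : MeasurePreserving T ν ν :=
    ⟨T.continuous.measurable, Measure.ext fun B hB => by
      rw [Measure.map_apply T.continuous.measurable hB, hinv B hB]⟩
  set e : ℕ → Circle := fun l => Circle.exp (2 * Real.pi * lam l)
  obtain ⟨nj, hpos, he⟩ := exists_tendsto_pow_nhds_one e
  refine ⟨nj, hpos, fun f =>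
    Lp.tendsto_eLpNorm_comp_sub_of_tendsto (fun j => hT.iterate (nj j)) ?_⟩
  refine LinearIsometry.tendsto_apply_of_dense_span
    (U := fun j => Lp.compMeasurePreservingₗᵢ ℂ _ (hT.iterate (nj j))) b.dense_span (fun l => ?_) f
  have hel : Tendsto (fun j => (e l : ℂ) ^ nj j) atTop (𝓝 1) :=
    (continuous_subtype_val.tendsto 1).comp (tendsto_pi_nhds.mp he l)
  have hbl : ∀ᵐ x ∂ν, (b l : Lp ℂ 2 ν) (T x) = (e l : ℂ) • (b l : Lp ℂ 2 ν) x := by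
    simpa only [e, smul_eq_mul, Circle.coe_exp_two_pi_mul] using hb l
  refine (one_smul ℂ (b l) ▸ hel.smul_const (b l)).congr fun j => ?_
  exact (Lp.compMeasurePreserving_iterate_of_ae_apply_eq_smul hT hbl (nj j)).symm

/-- A homeomorphism of a compact metric space preserving a Borel
probability measure with discrete spectrum is rigid. -/
theorem rigid_of_discrete_spectrum
    {X : Type*} [MetricSpace X] [CompactSpace X]
    [MeasurableSpace X] [BorelSpace X]
    (T : X ≃ₜ X)
    (ν : Measure X) [IsProbabilityMeasure ν]
    (hinv : ∀ B : Set X, MeasurableSet B → ν (⇑T ⁻¹' B) = ν B)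
    (b : HilbertBasis ℕ ℂ (Lp ℂ 2 ν)) (lam : ℕ → ℝ)
    (hb : ∀ l : ℕ, ∀ᵐ x ∂ν,
      (b l : Lp ℂ 2 ν) (T x) = Complex.exp (2 * Real.pi * Complex.I * lam l) * (b l : Lp ℂ 2 ν) x) :
    ∃ nj : ℕ → ℕ, (∀ j, 0 < nj j) ∧
      ∀ f : Lp ℂ 2 ν,
        Filter.Tendsto (fun j => eLpNorm (fun x => f ((⇑T)^[nj j] x) - f x) 2 ν)
          Filter.atTop (nhds 0) :=
  rigid_of_discrete_spectrum_general T ν hinv b lam hb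
end
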